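/- Variance of the stationary distribution: ∫₀^N x² p_σ^s(x) dx − (∫₀^N x p_σ^s(x) dx)² = (I^* − I^*(σ)) · I^*(σ), where I^* = (1 − 1/R₀ᴰ)N and I^*(σ) = (1 − 1/(R₀ᴰ + 1 − R₀ᴰ/R₀ˢ)) N. -/

import Mathlib

/-!
Substituting x = N t / (1 + t), which maps (0, ∞) onto (0, N), turns p(x) dx into
C t^(a-1) (1 + t)² e^(-c₀ t) dt with a = c₀ (R₀ˢ - 1). Every moment of p is therefore a
combination of Gamma integrals ∫ t^(s-1) e^(-c₀ t) dt = Γ(s) / c₀^s, and C is exactly the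
normalizing constant. Since 1 / c₀ = R₀ᴰ - R₀ˢ, the closed forms say that the mean is I*(σ)
and the second moment is I* · I*(σ), whence the variance (I* - I*(σ)) · I*(σ).
-/

open Real MeasureTheory Filter Set Topology

lemma image_mul_div_one_add_Ioi {N : ℝ} (hN : 0 < N) :
    (fun t : ℝ => N * t / (1 + t)) '' Ioi 0 = Ioo 0 N := by
  ext x
  constructor
  · rintro ⟨t, ht : 0 < t, rfl⟩
    exact ⟨by positivity, by rw [div_lt_iff₀ (by positivity)]; linarith⟩
  · rintro ⟨hx0, hxN⟩
    have hNx : 0 < N - x := by linarith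
    refine ⟨x / (N - x), mem_Ioi.2 (by positivity), ?_⟩
    field_simp
    ring

lemma integral_Ioo_eq_integral_Ioi_mul_div_one_add {N : ℝ} (hN : 0 < N) (g : ℝ → ℝ) :
    ∫ x in Ioo 0 N, g x = ∫ t in Ioi 0, N / (1 + t) ^ 2 * g (N * t / (1 + t)) := by
  have hderiv : ∀ t ∈ Ioi (0 : ℝ),
      HasDerivWithinAt (fun t => N * t / (1 + t)) (N / (1 + t) ^ 2) (Ioi 0) t := by
    intro t (ht : 0 < t)
    have h := ((hasDerivAt_id t).const_mul N).div ((hasDerivAt_id t).const_add 1)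
      (by positivity)
    exact (h.congr_deriv (by simp only [id]; ring)).hasDerivWithinAt
  have hinj : InjOn (fun t : ℝ => N * t / (1 + t)) (Ioi 0) := by
    intro u (hu : 0 < u) v (hv : 0 < v) huv
    rw [div_eq_div_iff (by positivity) (by positivity)] at huv
    nlinarith
  rw [← image_mul_div_one_add_Ioi hN,
    integral_image_eq_integral_abs_deriv_smul measurableSet_Ioi hderiv hinj]
  refine setIntegral_congr_fun measurableSet_Ioi fun t (ht : 0 < t) => ?_
  rw [smul_eq_mul, abs_of_pos (by positivity)]

lemma integral_rpow_mul_exp_neg_mul_Ioi_eq_div_mul {s c : ℝ} (hs : 0 < s) (hc : 0 < c) :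
    ∫ t in Ioi 0, t ^ s * exp (-(c * t)) =
      s / c * ∫ t in Ioi 0, t ^ (s - 1) * exp (-(c * t)) := by
  have h := integral_rpow_mul_exp_neg_mul_Ioi (a := s + 1) (by linarith) hc
  rw [add_sub_cancel_right] at h
  rw [h, integral_rpow_mul_exp_neg_mul_Ioi hs hc, Gamma_add_one hs.ne', rpow_add (by positivity),
    rpow_one]
  ring

lemma integral_rpow_add_one_mul_exp_neg_mul_Ioi {a c : ℝ} (ha : 0 < a) (hc : 0 < c) :
    ∫ t in Ioi 0, t ^ (a + 1) * exp (-(c * t)) =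
      (a + 1) / c * (a / c) * ((1 / c) ^ a * Gamma a) := by
  rw [integral_rpow_mul_exp_neg_mul_Ioi_eq_div_mul (by linarith) hc, add_sub_cancel_right,
    integral_rpow_mul_exp_neg_mul_Ioi_eq_div_mul ha hc, integral_rpow_mul_exp_neg_mul_Ioi ha hc,
    mul_assoc]

lemma integrableOn_rpow_mul_exp_neg_mul_Ioi {s c : ℝ} (hs : -1 < s) (hc : 0 < c) :
    IntegrableOn (fun t : ℝ => t ^ s * exp (-(c * t))) (Ioi 0) := by
  simpa only [rpow_one, neg_mul] using
    integrableOn_rpow_mul_exp_neg_mul_rpow (p := 1) hs zero_lt_one hc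

noncomputable def sisUnnormalizedDensity (N a c x : ℝ) : ℝ :=
  N ^ 3 * x ^ (a - 1) * (N - x) ^ (-(a + 3)) * exp (-c * x / (N - x))

lemma mul_sisUnnormalizedDensity_mul_div_one_add {N t : ℝ} (hN : 0 < N) (ht : 0 < t) (a c : ℝ) :
    N / (1 + t) ^ 2 * sisUnnormalizedDensity N a c (N * t / (1 + t)) =
      t ^ (a - 1) * (1 + t) ^ 2 * exp (-(c * t)) := by
  set u := N / (1 + t) with hu_def
  have hu : 0 < u := by positivity
  have hx : N * t / (1 + t) = t * u := by rw [hu_def]; ring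
  have hNx : N - t * u = u := by rw [hu_def]; field_simp; ring
  have hN' : N = u * (1 + t) := by rw [hu_def]; field_simp
  have hpow : u ^ (a - 1) * u ^ (-(a + 3)) = (u ^ 4)⁻¹ := by
    rw [← rpow_add hu, show a - 1 + -(a + 3) = -((4 : ℕ) : ℝ) by push_cast; ring,
      rpow_neg hu.le, rpow_natCast]
  have hexp : -c * (t * u) / u = -(c * t) := by field_simp
  rw [sisUnnormalizedDensity, hx, hNx, hexp, mul_rpow ht.le hu.le]
  calc N / (1 + t) ^ 2 * (N ^ 3 * (t ^ (a - 1) * u ^ (a - 1)) * u ^ (-(a + 3)) * exp (-(c * t)))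
      = N ^ 4 / (1 + t) ^ 2 * (u ^ (a - 1) * u ^ (-(a + 3))) * t ^ (a - 1) * exp (-(c * t)) := by
        ring
    _ = _ := by
        rw [hpow, hN']
        field_simp

lemma intervalIntegral_mul_sisUnnormalizedDensity_eq_integral_Ioi {N : ℝ} (hN : 0 < N) (a c : ℝ)
    (f : ℝ → ℝ) :
    ∫ x in 0..N, f x * sisUnnormalizedDensity N a c x =
      ∫ t in Ioi 0, f (N * t / (1 + t)) * (t ^ (a - 1) * (1 + t) ^ 2 * exp (-(c * t))) := by
  rw [intervalIntegral.integral_of_le hN.le, integral_Ioc_eq_integral_Ioo,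
    integral_Ioo_eq_integral_Ioi_mul_div_one_add hN]
  refine setIntegral_congr_fun measurableSet_Ioi fun t (ht : 0 < t) => ?_
  rw [mul_left_comm, mul_sisUnnormalizedDensity_mul_div_one_add hN ht]

lemma integral_mul_sisUnnormalizedDensity {N a c : ℝ} (hN : 0 < N) (ha : 0 < a) (hc : 0 < c) :
    ∫ x in 0..N, x * sisUnnormalizedDensity N a c x =
      N * (a / c) * (1 + (a + 1) / c) * ((1 / c) ^ a * Gamma a) := by
  have hpull : ∀ t ∈ Ioi (0 : ℝ),
      N * t / (1 + t) * (t ^ (a - 1) * (1 + t) ^ 2 * exp (-(c * t))) =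
        N * (t ^ a * exp (-(c * t)) + t ^ (a + 1) * exp (-(c * t))) := by
    intro t (ht : 0 < t)
    rw [rpow_sub_one ht.ne', rpow_add_one ht.ne']
    field_simp
  rw [intervalIntegral_mul_sisUnnormalizedDensity_eq_integral_Ioi hN,
    setIntegral_congr_fun measurableSet_Ioi hpull, integral_const_mul,
    integral_add (integrableOn_rpow_mul_exp_neg_mul_Ioi (by linarith) hc)
      (integrableOn_rpow_mul_exp_neg_mul_Ioi (by linarith) hc),
    integral_rpow_add_one_mul_exp_neg_mul_Ioi ha hc,
    integral_rpow_mul_exp_neg_mul_Ioi_eq_div_mul ha hc, integral_rpow_mul_exp_neg_mul_Ioi ha hc]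
  ring

lemma integral_sq_mul_sisUnnormalizedDensity {N a c : ℝ} (hN : 0 < N) (ha : 0 < a) (hc : 0 < c) :
    ∫ x in 0..N, x ^ 2 * sisUnnormalizedDensity N a c x =
      N ^ 2 * (a / c) * ((a + 1) / c) * ((1 / c) ^ a * Gamma a) := by
  have hpull : ∀ t ∈ Ioi (0 : ℝ),
      (N * t / (1 + t)) ^ 2 * (t ^ (a - 1) * (1 + t) ^ 2 * exp (-(c * t))) =
        N ^ 2 * (t ^ (a + 1) * exp (-(c * t))) := by
    intro t (ht : 0 < t)
    rw [rpow_sub_one ht.ne', rpow_add_one ht.ne']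
    field_simp
  rw [intervalIntegral_mul_sisUnnormalizedDensity_eq_integral_Ioi hN,
    setIntegral_congr_fun measurableSet_Ioi hpull, integral_const_mul,
    integral_rpow_add_one_mul_exp_neg_mul_Ioi ha hc]
  ring

lemma one_sub_one_div_add_one_sub_div {R D : ℝ} (hR : 1 < R) (hRD : R < D) :
    1 - 1 / (D + 1 - D / R) = (R - 1) * D / (D * R - D + R) := by
  have hQ : D * R - D + R ≠ 0 := by nlinarith
  have hden : D + 1 - D / R = (D * R - D + R) / R := by field_simp; ring
  rw [hden, one_div_div, eq_div_iff hQ, sub_mul, div_mul_cancel₀ _ hQ]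
  ring

theorem variance_of_stationary_distribution_general
    (N β μ γ σ : ℝ) (hN : 0 < N) (hμ : 0 < μ) (hγ : 0 < γ) (hσ : 0 < σ)
    (R0D R0S c0 C : ℝ)
    (hR0D : R0D = β * N / (μ + γ))
    (hR0S : R0S = β * N / (μ + γ) - σ ^ 2 * N ^ 2 / (2 * (μ + γ)))
    (hc0 : c0 = 2 * (μ + γ) / (σ ^ 2 * N ^ 2))
    (hR : 1 < R0S)
    (hC : C⁻¹ = c0 ^ (-(c0 * (R0S - 1))) * (R0S ^ 2 + c0⁻¹ * (R0S - 1)) *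
      Real.Gamma (c0 * (R0S - 1)))
    (p : ℝ → ℝ)
    (hp : ∀ x, p x = C * N ^ 3 * x ^ (c0 * (R0S - 1) - 1) *
      (N - x) ^ (-(c0 * (R0S - 1) + 3)) * Real.exp (-c0 * x / (N - x)))
    (Istar Istarσ : ℝ)
    (hIstar : Istar = (1 - 1 / R0D) * N)
    (hIstarσ : Istarσ = (1 - 1 / (R0D + 1 - R0D / R0S)) * N) :
    (∫ x in (0:ℝ)..N, x ^ 2 * p x) - (∫ x in (0:ℝ)..N, x * p x) ^ 2 =
      (Istar - Istarσ) * Istarσ := by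
  have hc0pos : 0 < c0 := by rw [hc0]; positivity
  have hgap : c0⁻¹ = R0D - R0S := by rw [hc0, hR0D, hR0S]; field_simp; ring
  have hRD : R0S < R0D := by linarith [inv_pos.2 hc0pos]
  set a := c0 * (R0S - 1) with ha_def
  have ha : 0 < a := mul_pos hc0pos (by linarith)
  have hac : a / c0 = R0S - 1 := by rw [ha_def]; field_simp
  have ha1c : (a + 1) / c0 = R0D - 1 := by rw [add_div, hac, one_div, hgap]; ring
  obtain ⟨w, hw_def⟩ : ∃ w, (1 / c0) ^ a * Gamma a = w := ⟨_, rfl⟩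
  have hw : 0 < w := hw_def ▸ by positivity
  have hCinv : C⁻¹ = (R0D * R0S - R0D + R0S) * w := by
    rw [hC, hgap, ← hw_def, rpow_neg hc0pos.le, ← inv_rpow hc0pos.le, ← one_div]; ring
  have hp' : p = fun x => C * sisUnnormalizedDensity N a c0 x :=
    funext fun x => by rw [hp, sisUnnormalizedDensity]; ring
  have hmean : ∫ x in (0:ℝ)..N, x * p x = Istarσ := by
    simp only [hp', mul_left_comm _ C, intervalIntegral.integral_const_mul]
    rw [integral_mul_sisUnnormalizedDensity hN ha hc0pos, hac, ha1c, hw_def, hIstarσ,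
      one_sub_one_div_add_one_sub_div hR hRD, ← inv_inv C, hCinv]
    field_simp; ring
  have hsecond : ∫ x in (0:ℝ)..N, x ^ 2 * p x = Istar * Istarσ := by
    simp only [hp', mul_left_comm _ C, intervalIntegral.integral_const_mul]
    rw [integral_sq_mul_sisUnnormalizedDensity hN ha hc0pos, hac, ha1c, hw_def, hIstarσ, hIstar,
      one_sub_one_div_add_one_sub_div hR hRD, ← inv_inv C, hCinv]
    have hD : R0D ≠ 0 := by linarith
    field_simp
  rw [hmean, hsecond]
  ring

/-- variance of the stationary distribution. -/
theorem variance_of_stationary_distribution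
    (N β μ γ σ : ℝ) (hN : 0 < N) (hβ : 0 < β) (hμ : 0 < μ) (hγ : 0 < γ) (hσ : 0 < σ)
    (R0D R0S c0 C : ℝ)
    (hR0D : R0D = β * N / (μ + γ))
    (hR0S : R0S = β * N / (μ + γ) - σ ^ 2 * N ^ 2 / (2 * (μ + γ)))
    (hc0 : c0 = 2 * (μ + γ) / (σ ^ 2 * N ^ 2))
    (hR : 1 < R0S)
    (hCpos : 0 < C)
    (hC : C⁻¹ = c0 ^ (-(c0 * (R0S - 1))) * (R0S ^ 2 + c0⁻¹ * (R0S - 1)) *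
      Real.Gamma (c0 * (R0S - 1)))
    (p : ℝ → ℝ)
    (hp : ∀ x, p x = C * N ^ 3 * x ^ (c0 * (R0S - 1) - 1) *
      (N - x) ^ (-(c0 * (R0S - 1) + 3)) * Real.exp (-c0 * x / (N - x)))
    (Istar Istarσ : ℝ)
    (hIstar : Istar = (1 - 1 / R0D) * N)
    (hIstarσ : Istarσ = (1 - 1 / (R0D + 1 - R0D / R0S)) * N) :
    (∫ x in (0:ℝ)..N, x ^ 2 * p x) - (∫ x in (0:ℝ)..N, x * p x) ^ 2 =
      (Istar - Istarσ) * Istarσ :=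
  variance_of_stationary_distribution_general N β μ γ σ hN hμ hγ hσ R0D R0S c0 C hR0D hR0S hc0 hR hC
    p hp Istar Istarσ hIstar hIstarσ
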